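/- arXiv:1007.4284 — 2 statements merged into one kernel-verified Lean document; each statement's English description precedes it below -/
import Mathlib

section
/- Suppose f is a C² mapping from an open set Ω ⊆ ℝ^d into ℝ^d, a ∈ Ω, b = f(a), |det(Df(a))| ≥ c for some c > 0, and |D^α f_i(x)| ≤ C for all x ∈ Ω, all 1 ≤ i ≤ d and all multi-indices α with |α| ≤ 2, where C > 0. Let r₀ > 0 satisfy r₀ ≤ sup{r > 0 : B(a, r) ⊆ Ω}. Set r₁ = min{ c/(2·d^{7/2}·(d−1)!·C^d), r₀ } and r₂ = ( c/(4·d^{3/2}·(d−1)!·C^{d−1}) )·r₁. Then f restricted to B(a, r₁) is injective, its image f(B(a, r₁)) is an open set containing the ball B(b, r₂), and the inverse map is C². -/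
noncomputable section

open Real MeasureTheory Pointwise

abbrev Eu (d : ℕ) := EuclideanSpace ℝ (Fin d)

def ee (u : ℝ) : ℂ := Complex.exp (-2 * Real.pi * Complex.I * u)

def vecZ {d : ℕ} (m : Fin d → ℤ) : Eu d := (WithLp.equiv 2 (Fin d → ℝ)).symm fun i => (m i : ℝ)

def pd {d : ℕ} (L : List (Fin d)) (f : Eu d → ℝ) : Eu d → ℝ :=
  L.foldr (fun i g x => fderiv ℝ g x (EuclideanSpace.single i 1)) f

def pdm {d : ℕ} (μ : Fin d → ℕ) (f : Eu d → ℝ) : Eu d → ℝ :=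
  pd ((List.finRange d).flatMap fun i => List.replicate (μ i) i) f

def hess {d : ℕ} (f : Eu d → ℝ) (x : Eu d) : Matrix (Fin d) (Fin d) ℝ :=
  Matrix.of fun i j => pd [i, j] f x

def expS {d : ℕ} (T M : ℝ) (Ω : Set (Eu d)) (G F : Eu d → ℝ) : ℂ :=
  ∑' m : Fin d → ℤ, Set.indicator Ω (fun x => (G x : ℂ) * ee (T * F x)) ((M⁻¹ : ℝ) • vecZ m)

def latticeCount {d : ℕ} (s : Set (Eu d)) : ℕ := Nat.card {m : Fin d → ℤ // vecZ m ∈ s}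

def dirD {d : ℕ} (L : List (Eu d)) (f : Eu d → ℝ) : Eu d → ℝ :=
  L.foldr (fun v g x => fderiv ℝ g x v) f

def shiftB {d q : ℕ} (M : ℝ) (r : Fin q → Fin d → ℤ) (h : Fin q → ℕ) (u : Fin q → Bool) : Eu d :=
  ∑ l, ((h l : ℝ) / M * (if u l then 1 else 0)) • vecZ (r l)

def Gq {d q : ℕ} (M : ℝ) (G : Eu d → ℝ) (r : Fin q → Fin d → ℤ) (h : Fin q → ℕ) (x : Eu d) : ℝ :=
  ∏ u : Fin q → Bool, G (x + shiftB M r h u)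

def Fq {d q : ℕ} (M : ℝ) (F : Eu d → ℝ) (r : Fin q → Fin d → ℤ) (h : Fin q → ℕ) (x : Eu d) : ℝ :=
  ∫ u in Set.univ.pi fun _ : Fin q => Set.Ioo (0:ℝ) 1,
    dirD (List.ofFn fun l => vecZ (r l)) F (x + ∑ l, ((h l : ℝ) / M * u l) • vecZ (r l))

def Omq {d q : ℕ} (M : ℝ) (Ω : Set (Eu d)) (r : Fin q → Fin d → ℤ) (h : Fin q → ℕ) : Set (Eu d) :=
  {x ∈ Ω | ∀ u : Fin q → Bool, x + shiftB M r h u ∈ Ω}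

def Hpow (q : ℕ) (Hp : ℝ) (l : Fin q) : ℝ := Hp ^ ((2:ℝ) ^ (((l : ℕ) : ℤ) + 1 - (q : ℤ)))

def rhoeps {d : ℕ} (ε : ℝ) (ρ : Eu d → ℝ) (y : Eu d) : ℝ := ε ^ (-(d:ℤ)) * ρ (ε⁻¹ • y)

def convInd {d : ℕ} (s : Set (Eu d)) (ε : ℝ) (ρ : Eu d → ℝ) (x : Eu d) : ℝ :=
  ∫ y, Set.indicator s (fun _ => (1:ℝ)) y * rhoeps ε ρ (x - y)

def Neps {d : ℕ} (B : Set (Eu d)) (ε : ℝ) (ρ : Eu d → ℝ) (t : ℝ) : ℝ :=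
  ∑' k : Fin d → ℤ, convInd (t • B) ε ρ (vecZ k)

def ftSet {d : ℕ} (s : Set (Eu d)) (ξ : Eu d) : ℂ := ∫ x in s, ee (∑ i, x i * ξ i)

def ftFun {d : ℕ} (ρ : Eu d → ℝ) (ξ : Eu d) : ℂ := ∫ x, (ρ x : ℂ) * ee (∑ i, x i * ξ i)

/-!
Cramer's rule bounds the entries of `Df(a)⁻¹` by `(d-1)! C^(d-1) / c`, hence
`‖Df(a)⁻¹‖ ≤ J := d (d-1)! C^(d-1) / c`. The bound on second derivatives and the mean value
inequality give `‖Df(x) - Df(a)‖ ≤ d^(3/2) C ‖x - a‖`, which the choice of `r₁` keeps below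
`1 / (2J)` on `B(a, r₁)`. There `f` is therefore a small perturbation of the invertible linear
map `Df(a)` (`ApproximatesLinearOn`): it is injective, has open image containing
`B(b, r₁ / (2J)) ⊇ B(b, r₂)`, and `Df` stays invertible, so the inverse is `C²`.
-/

open Metric Set NNReal

namespace EuclideanSpace

variable {ι : Type*} [Fintype ι]

theorem norm_le_sqrt_card_mul {v : EuclideanSpace ℝ ι} {B : ℝ} (hB : 0 ≤ B)
    (h : ∀ i, |v i| ≤ B) : ‖v‖ ≤ √(Fintype.card ι) * B := by
  rw [EuclideanSpace.norm_eq, ← Real.sqrt_sq hB, ← Real.sqrt_mul (Nat.cast_nonneg _)]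
  gcongr
  calc ∑ i, ‖v i‖ ^ 2 ≤ ∑ _i : ι, B ^ 2 := by
        gcongr with i
        rw [Real.norm_eq_abs]
        exact h i
    _ = _ := by simp

theorem sum_abs_le_sqrt_card_mul_norm (v : EuclideanSpace ℝ ι) :
    ∑ i, |v i| ≤ √(Fintype.card ι) * ‖v‖ := by
  have h := Real.sum_mul_le_sqrt_mul_sqrt Finset.univ (fun _ => 1) (fun i => |v i|)
  simpa [EuclideanSpace.norm_eq, sq_abs] using h

theorem opNorm_le_sqrt_card_mul [DecidableEq ι] {F : Type*} [SeminormedAddCommGroup F]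
    [NormedSpace ℝ F] (φ : EuclideanSpace ℝ ι →L[ℝ] F) {B : ℝ} (hB : 0 ≤ B)
    (h : ∀ k, ‖φ (single k 1)‖ ≤ B) : ‖φ‖ ≤ √(Fintype.card ι) * B := by
  refine φ.opNorm_le_bound (by positivity) fun v => ?_
  conv_lhs => rw [← (basisFun ι ℝ).sum_repr v]
  calc ‖φ (∑ i, (basisFun ι ℝ).repr v i • basisFun ι ℝ i)‖
      ≤ ∑ i, |v i| * B := by
        simp only [map_sum, map_smul, basisFun_apply, basisFun_repr]
        refine (norm_sum_le _ _).trans (Finset.sum_le_sum fun i _ => ?_)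
        rw [norm_smul, Real.norm_eq_abs]
        exact mul_le_mul_of_nonneg_left (h i) (abs_nonneg _)
    _ = (∑ i, |v i|) * B := (Finset.sum_mul ..).symm
    _ ≤ √(Fintype.card ι) * B * ‖v‖ := by
        rw [mul_right_comm]
        exact mul_le_mul_of_nonneg_right (sum_abs_le_sqrt_card_mul_norm v) hB

end EuclideanSpace

namespace Matrix

variable {ι : Type*} [Fintype ι] [DecidableEq ι]

theorem toEuclideanCLM_single_apply (A : Matrix ι ι ℝ) (i j : ι) :
    toEuclideanCLM (n := ι) (𝕜 := ℝ) A (EuclideanSpace.single j 1) i = A i j := by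
  simp [EuclideanSpace.single]

theorem norm_toEuclideanCLM_le {A : Matrix ι ι ℝ} {B : ℝ} (hB : 0 ≤ B)
    (h : ∀ i j, |A i j| ≤ B) :
    ‖toEuclideanCLM (n := ι) (𝕜 := ℝ) A‖ ≤ Fintype.card ι * B := by
  have hcol : ∀ j, ‖toEuclideanCLM (n := ι) (𝕜 := ℝ) A (EuclideanSpace.single j 1)‖
      ≤ √(Fintype.card ι) * B := fun j =>
    EuclideanSpace.norm_le_sqrt_card_mul hB fun i => by
      rw [toEuclideanCLM_single_apply]; exact h i j
  calc _ ≤ √(Fintype.card ι) * (√(Fintype.card ι) * B) :=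
        EuclideanSpace.opNorm_le_sqrt_card_mul _ (by positivity) hcol
    _ = Fintype.card ι * B := by
        rw [← mul_assoc, Real.mul_self_sqrt (Nat.cast_nonneg _)]

theorem exists_toEuclideanCLM_eq_norm_symm_le {A : Matrix ι ι ℝ} (hA : IsUnit A.det) {B : ℝ}
    (hB : 0 ≤ B) (h : ∀ i j, |A⁻¹ i j| ≤ B) :
    ∃ e : EuclideanSpace ℝ ι ≃L[ℝ] EuclideanSpace ℝ ι,
      (e : EuclideanSpace ℝ ι →L[ℝ] EuclideanSpace ℝ ι) = toEuclideanCLM (n := ι) (𝕜 := ℝ) A ∧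
      ‖(e.symm : EuclideanSpace ℝ ι →L[ℝ] EuclideanSpace ℝ ι)‖ ≤ Fintype.card ι * B := by
  refine ⟨.equivOfInverse (toEuclideanCLM (n := ι) (𝕜 := ℝ) A)
    (toEuclideanCLM (n := ι) (𝕜 := ℝ) A⁻¹) (fun x => ?_) (fun x => ?_), rfl,
    norm_toEuclideanCLM_le hB h⟩
  · rw [← mul_apply_eq_comp, ← map_mul, nonsing_inv_mul A hA, map_one, one_apply_eq_self]
  · rw [← mul_apply_eq_comp, ← map_mul, mul_nonsing_inv A hA, map_one, one_apply_eq_self]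

end Matrix

section Adjugate

open Nat

variable {R S : Type*} [CommRing R] [Nontrivial R] [CommRing S] [LinearOrder S]
  [IsStrictOrderedRing S]

theorem Matrix.adjugate_apply_le {n : ℕ} {A : Matrix (Fin n) (Fin n) R} {abv : AbsoluteValue R S}
    {x : S} (hx : ∀ i j, abv (A i j) ≤ x) (i j : Fin n) :
    abv (A.adjugate i j) ≤ (n - 1)! • x ^ (n - 1) := by
  cases n with
  | zero => exact i.elim0
  | succ n =>
    rw [adjugate_fin_succ_eq_det_submatrix, abv.map_mul, abv.map_pow, abv.map_neg, abv.map_one,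
      one_pow, one_mul]
    simpa using det_le (A := A.submatrix j.succAbove i.succAbove) fun k l => hx _ _

theorem Matrix.abs_inv_apply_le {n : ℕ} {A : Matrix (Fin n) (Fin n) ℝ} {C : ℝ}
    (h : ∀ i j, |A i j| ≤ C) (i j : Fin n) :
    |A⁻¹ i j| ≤ (n - 1)! * C ^ (n - 1) / |A.det| := by
  rw [inv_def, Ring.inverse_eq_inv', smul_apply, smul_eq_mul, abs_mul, abs_inv, div_eq_inv_mul]
  gcongr
  simpa using adjugate_apply_le (abv := AbsoluteValue.abs) h i j

end Adjugate

section InverseFunction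

variable {𝕜 : Type*} [NontriviallyNormedField 𝕜]
  {E F : Type*} [NormedAddCommGroup E] [NormedSpace 𝕜 E] [NormedAddCommGroup F] [NormedSpace 𝕜 F]
  [CompleteSpace E]

theorem ContinuousLinearEquiv.isInvertible_of_norm_sub_lt (e : E ≃L[𝕜] E) {T : E →L[𝕜] E}
    (h : ‖T - e‖ < ‖(e.symm : E →L[𝕜] E)‖⁻¹) : T.IsInvertible :=
  ⟨ContinuousLinearEquiv.unitsEquiv 𝕜 E
    (Units.ofNearby ((ContinuousLinearEquiv.unitsEquiv 𝕜 E).symm e) T h), rfl⟩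

theorem ApproximatesLinearOn.contDiffOn_toOpenPartialHomeomorph_symm {f : E → F}
    {e : E ≃L[𝕜] F} {s : Set E} {c : ℝ≥0} (hf : ApproximatesLinearOn f (e : E →L[𝕜] F) s c)
    (hc : Subsingleton E ∨ c < ‖(e.symm : F →L[𝕜] E)‖₊⁻¹) (hs : IsOpen s) {n : WithTop ℕ∞}
    (hn : n ≠ 0) (hfn : ContDiffOn 𝕜 n f s) (hinv : ∀ x ∈ s, (fderiv 𝕜 f x).IsInvertible) :
    ContDiffOn 𝕜 n (hf.toOpenPartialHomeomorph f s hc hs).symm (f '' s) := by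
  rintro _ ⟨x, hx, rfl⟩
  set Φ := hf.toOpenPartialHomeomorph f s hc hs
  obtain ⟨e', he'⟩ := hinv x hx
  have hfx : ContDiffAt 𝕜 n f x := hfn.contDiffAt (hs.mem_nhds hx)
  have hΦx : Φ.symm (f x) = x := Φ.left_inv hx
  refine (Φ.contDiffAt_symm (f₀' := e') (mem_image_of_mem f hx) ?_ ?_).contDiffWithinAt
  · rw [hΦx, he']
    exact (hfx.differentiableAt hn).hasFDerivAt
  · rwa [hΦx]

end InverseFunction

section RealInverseFunction

variable {E F : Type*} [NormedAddCommGroup E] [NormedSpace ℝ E] [NormedAddCommGroup F]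
  [NormedSpace ℝ F]

theorem Convex.approximatesLinearOn_of_norm_fderiv_sub_le {f : E → F} {f' : E →L[ℝ] F}
    {s : Set E} (hs : Convex ℝ s) (hf : ∀ x ∈ s, DifferentiableAt ℝ f x) {c : ℝ≥0}
    (hc : ∀ x ∈ s, ‖fderiv ℝ f x - f'‖ ≤ c) : ApproximatesLinearOn f f' s c :=
  fun _ hx _ hy => hs.norm_image_sub_le_of_norm_fderiv_le' hf hc hy hx

variable [CompleteSpace E]

theorem ApproximatesLinearOn.ball_subset_image {f : E → F} {e : E ≃L[ℝ] F} {a : E} {r : ℝ}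
    {c : ℝ≥0} (hf : ApproximatesLinearOn f (e : E →L[ℝ] F) (ball a r) c)
    (hc : (c : ℝ) < ‖(e.symm : F →L[ℝ] E)‖⁻¹) :
    ball (f a) ((‖(e.symm : F →L[ℝ] E)‖⁻¹ - c) * r) ⊆ f '' ball a r := by
  intro y hy
  have hκ : 0 < ‖(e.symm : F →L[ℝ] E)‖⁻¹ - c := sub_pos.2 hc
  set ε := dist y (f a) / (‖(e.symm : F →L[ℝ] E)‖⁻¹ - c)
  have hεr : ε < r := (div_lt_iff₀' hκ).2 (mem_ball.1 hy)
  have hsub : closedBall a ε ⊆ ball a r := closedBall_subset_ball hεr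
  obtain ⟨x, hx, rfl⟩ := (hf.mono_set hsub).surjOn_closedBall_of_nonlinearRightInverse
    e.toNonlinearRightInverse (by positivity) subset_rfl
    (mem_closedBall.2 (mul_div_cancel₀ _ hκ.ne').ge)
  exact ⟨x, hsub hx, rfl⟩

theorem inverse_function_theorem_on_ball {f : E → E} {e : E ≃L[ℝ] E} {a : E} {r : ℝ}
    {δ : ℝ≥0} {n : WithTop ℕ∞} (hn : n ≠ 0) (hf : ContDiffOn ℝ n f (ball a r))
    (hfe : ∀ x ∈ ball a r, ‖fderiv ℝ f x - e‖ ≤ δ)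
    (hδ : (δ : ℝ) < ‖(e.symm : E →L[ℝ] E)‖⁻¹) :
    InjOn f (ball a r) ∧ IsOpen (f '' ball a r) ∧
      ball (f a) ((‖(e.symm : E →L[ℝ] E)‖⁻¹ - δ) * r) ⊆ f '' ball a r ∧
      ∃ g : E → E, (∀ x ∈ ball a r, g (f x) = x) ∧ ContDiffOn ℝ n g (f '' ball a r) := by
  have happrox : ApproximatesLinearOn f (e : E →L[ℝ] E) (ball a r) δ :=
    (convex_ball a r).approximatesLinearOn_of_norm_fderiv_sub_le
      (fun x hx => (hf.contDiffAt (isOpen_ball.mem_nhds hx)).differentiableAt hn) hfe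
  have hc : Subsingleton E ∨ δ < ‖(e.symm : E →L[ℝ] E)‖₊⁻¹ := by
    right
    rwa [← NNReal.coe_lt_coe, NNReal.coe_inv, coe_nnnorm]
  set Φ := happrox.toOpenPartialHomeomorph f (ball a r) hc isOpen_ball
  refine ⟨happrox.injOn hc, Φ.open_target, happrox.ball_subset_image hδ, Φ.symm,
    fun x hx => Φ.left_inv hx, ?_⟩
  exact happrox.contDiffOn_toOpenPartialHomeomorph_symm hc isOpen_ball hn hf fun x hx =>
    e.isInvertible_of_norm_sub_lt ((hfe x hx).trans_lt hδ)

end RealInverseFunction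

theorem fderiv_piLp_apply {𝕜 ι H : Type*} [NontriviallyNormedField 𝕜] [Fintype ι]
    {E : ι → Type*} [∀ i, NormedAddCommGroup (E i)] [∀ i, NormedSpace 𝕜 (E i)]
    [NormedAddCommGroup H] [NormedSpace 𝕜 H] {p : ENNReal} [Fact (1 ≤ p)] {f : H → PiLp p E}
    {x : H} (hf : DifferentiableAt 𝕜 f x) (i : ι) (v : H) :
    fderiv 𝕜 (fun y => f y i) x v = fderiv 𝕜 f x v i := by
  have h : HasFDerivAt (fun y => f y i) (PiLp.proj p E i ∘L fderiv 𝕜 f x) x :=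
    (PiLp.proj p (𝕜 := 𝕜) E i).hasFDerivAt.comp x hf.hasFDerivAt
  rw [h.fderiv]
  rfl

section Jacobian

variable {ι : Type*} [Fintype ι] [DecidableEq ι]

def jacobianMatrix (f : EuclideanSpace ℝ ι → EuclideanSpace ℝ ι) (x : EuclideanSpace ℝ ι) :
    Matrix ι ι ℝ :=
  Matrix.of fun i j => fderiv ℝ (fun y => f y i) x (EuclideanSpace.single j 1)

theorem toEuclideanCLM_jacobianMatrix {f : EuclideanSpace ℝ ι → EuclideanSpace ℝ ι}
    {x : EuclideanSpace ℝ ι} (hf : DifferentiableAt ℝ f x) :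
    Matrix.toEuclideanCLM (n := ι) (𝕜 := ℝ) (jacobianMatrix f x) = fderiv ℝ f x := by
  refine ContinuousLinearMap.coe_injective ((EuclideanSpace.basisFun ι ℝ).toBasis.ext fun j => ?_)
  ext i
  simp [Matrix.toEuclideanCLM_single_apply, jacobianMatrix, fderiv_piLp_apply hf]

end Jacobian

theorem exists_equiv_eq_fderiv_norm_symm_le {d : ℕ} {f : Eu d → Eu d} {a : Eu d}
    (hf : DifferentiableAt ℝ f a) {c C : ℝ} (hc : 0 < c) (hC : 0 ≤ C)
    (hdet : c ≤ |(jacobianMatrix f a).det|) (h : ∀ i j, |jacobianMatrix f a i j| ≤ C) :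
    ∃ e : Eu d ≃L[ℝ] Eu d, (e : Eu d →L[ℝ] Eu d) = fderiv ℝ f a ∧
      ‖(e.symm : Eu d →L[ℝ] Eu d)‖ ≤ d * ((d - 1).factorial * C ^ (d - 1) / c) := by
  have hinv : ∀ i j, |(jacobianMatrix f a)⁻¹ i j| ≤ (d - 1).factorial * C ^ (d - 1) / c :=
    fun i j => (Matrix.abs_inv_apply_le h i j).trans
      (div_le_div_of_nonneg_left (by positivity) hc hdet)
  have hunit : IsUnit (jacobianMatrix f a).det :=
    isUnit_iff_ne_zero.2 fun h0 => by rw [h0, abs_zero] at hdet; linarith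
  simpa [toEuclideanCLM_jacobianMatrix hf] using
    (jacobianMatrix f a).exists_toEuclideanCLM_eq_norm_symm_le hunit (by positivity) hinv

section SecondDerivatives

variable {d : ℕ} {s : Set (Eu d)} {C : ℝ}

theorem abs_pd_sub_pd_le {g : Eu d → ℝ} (hs : IsOpen s) (hconv : Convex ℝ s)
    (hg : ContDiffOn ℝ 2 g s) (hC : 0 ≤ C) (j : Fin d) (h : ∀ k, ∀ x ∈ s, |pd [k, j] g x| ≤ C)
    {x y : Eu d} (hx : x ∈ s) (hy : y ∈ s) :
    |pd [j] g y - pd [j] g x| ≤ √d * C * ‖y - x‖ := by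
  have hdiff : ∀ z ∈ s, DifferentiableAt ℝ (pd [j] g) z := fun z hz =>
    (((hg.fderiv_of_isOpen hs (by norm_num : (1 : WithTop ℕ∞) + 1 ≤ 2)).differentiableOn
      one_ne_zero).differentiableAt (hs.mem_nhds hz)).clm_apply (differentiableAt_const _)
  have hbound : ∀ z ∈ s, ‖fderiv ℝ (pd [j] g) z‖ ≤ √d * C := fun z hz => by
    simpa using EuclideanSpace.opNorm_le_sqrt_card_mul _ hC fun k => h k z hz
  exact hconv.norm_image_sub_le_of_norm_fderiv_le hdiff hbound hx hy

theorem norm_fderiv_sub_fderiv_le {f : Eu d → Eu d} (hs : IsOpen s) (hconv : Convex ℝ s)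
    (hf : ContDiffOn ℝ 2 f s) (hC : 0 ≤ C)
    (h : ∀ i j k, ∀ x ∈ s, |pd [k, j] (fun y => f y i) x| ≤ C)
    {x y : Eu d} (hx : x ∈ s) (hy : y ∈ s) :
    ‖fderiv ℝ f y - fderiv ℝ f x‖ ≤ d * √d * C * ‖y - x‖ := by
  have hdiff : ∀ z ∈ s, DifferentiableAt ℝ f z := fun z hz =>
    (hf.contDiffAt (hs.mem_nhds hz)).differentiableAt two_ne_zero
  have hcol : ∀ j, ‖(fderiv ℝ f y - fderiv ℝ f x) (EuclideanSpace.single j 1)‖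
      ≤ √d * (√d * C * ‖y - x‖) := by
    intro j
    refine (EuclideanSpace.norm_le_sqrt_card_mul (B := √d * C * ‖y - x‖) (by positivity)
      fun i => ?_).trans_eq (by simp)
    have hfi : ContDiffOn ℝ 2 (fun z => f z i) s :=
      (EuclideanSpace.proj (𝕜 := ℝ) i).contDiff.comp_contDiffOn hf
    rw [sub_apply, PiLp.sub_apply, ← fderiv_piLp_apply (hdiff y hy),
      ← fderiv_piLp_apply (hdiff x hx)]
    exact abs_pd_sub_pd_le hs hconv hfi hC j (h i j) hx hy
  calc _ ≤ √d * (√d * (√d * C * ‖y - x‖)) := by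
        simpa using EuclideanSpace.opNorm_le_sqrt_card_mul _ (by positivity) hcol
    _ = d * √d * C * ‖y - x‖ := by
        rw [← mul_assoc, Real.mul_self_sqrt (Nat.cast_nonneg _)]; ring

end SecondDerivatives

section Constants

variable {d : ℕ} {c C : ℝ}

theorem deriv_oscillation_le_of_le_radius (hd : 1 ≤ d) (hc : 0 < c) (hC : 0 < C) {r : ℝ}
    (hr : r ≤ c / (2 * (d : ℝ) ^ ((7 : ℝ) / 2) * (d - 1).factorial * C ^ d)) :
    d * √d * C * r ≤ (2 * (d * ((d - 1).factorial * C ^ (d - 1) / c)))⁻¹ := by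
  have hd0 : (0 : ℝ) < d := by exact_mod_cast hd
  have hd1 : (1 : ℝ) ≤ d := by exact_mod_cast hd
  have hCd : C ^ d = C ^ (d - 1) * C := by rw [← pow_succ, Nat.sub_add_cancel hd]
  have h72 : (d : ℝ) ^ ((7 : ℝ) / 2) = d ^ 3 * √d := by
    rw [Real.sqrt_eq_rpow, ← Real.rpow_natCast, ← Real.rpow_add' hd0.le (by norm_num)]
    norm_num
  rw [h72, hCd] at hr
  calc d * √d * C * r
      ≤ d * √d * C * (c / (2 * (d ^ 3 * √d) * (d - 1).factorial * (C ^ (d - 1) * C))) := by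
        gcongr
    _ = (2 * (d * ((d - 1).factorial * C ^ (d - 1) / c)))⁻¹ / d := by field_simp
    _ ≤ (2 * (d * ((d - 1).factorial * C ^ (d - 1) / c)))⁻¹ := div_le_self (by positivity) hd1

theorem shrink_factor_le_inv_two_mul (hd : 1 ≤ d) (hc : 0 < c) (hC : 0 < C) :
    c / (4 * (d : ℝ) ^ ((3 : ℝ) / 2) * (d - 1).factorial * C ^ (d - 1))
      ≤ (2 * (d * ((d - 1).factorial * C ^ (d - 1) / c)))⁻¹ := by
  have hd0 : (0 : ℝ) < d := by exact_mod_cast hd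
  have hs : 1 ≤ √(d : ℝ) := Real.one_le_sqrt.2 (by exact_mod_cast hd)
  have h32 : (d : ℝ) ^ ((3 : ℝ) / 2) = d * √d := by
    rw [Real.sqrt_eq_rpow, ← Real.rpow_one_add' hd0.le (by norm_num)]
    norm_num
  rw [h32]
  calc c / (4 * (d * √d) * (d - 1).factorial * C ^ (d - 1))
      ≤ c / (2 * d * (d - 1).factorial * C ^ (d - 1)) := by gcongr <;> nlinarith
    _ = (2 * (d * ((d - 1).factorial * C ^ (d - 1) / c)))⁻¹ := by field_simp

end Constants

/-- quantitative inverse function theorem. -/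
theorem stmt7 (d : ℕ) (hd : 1 ≤ d)
    (Ω : Set (Eu d)) (hΩ : IsOpen Ω)
    (f : Eu d → Eu d) (hf : ContDiffOn ℝ 2 f Ω)
    (a : Eu d) (ha : a ∈ Ω) (b : Eu d) (hb : b = f a)
    (c C : ℝ) (hc : 0 < c) (hC : 0 < C)
    (hdet : c ≤ |(Matrix.of fun i j : Fin d =>
      fderiv ℝ (fun x => f x i) a (EuclideanSpace.single j 1)).det|)
    (hder : ∀ (i : Fin d) (L : List (Fin d)), L.length ≤ 2 → ∀ x ∈ Ω,
      |pd L (fun x => f x i) x| ≤ C)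
    (r₀ : ℝ) (hr₀ : 0 < r₀) (hball : Metric.ball a r₀ ⊆ Ω)
    (r₁ r₂ : ℝ)
    (hr₁ : r₁ = min (c / (2 * (d : ℝ) ^ ((7 : ℝ) / 2) * (Nat.factorial (d - 1)) * C ^ d)) r₀)
    (hr₂ : r₂ = c / (4 * (d : ℝ) ^ ((3 : ℝ) / 2) * (Nat.factorial (d - 1)) * C ^ (d - 1)) * r₁) :
    Set.InjOn f (Metric.ball a r₁) ∧
    IsOpen (f '' Metric.ball a r₁) ∧
    Metric.ball b r₂ ⊆ f '' Metric.ball a r₁ ∧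
    ∃ g : Eu d → Eu d, (∀ x ∈ Metric.ball a r₁, g (f x) = x) ∧
      ContDiffOn ℝ 2 g (f '' Metric.ball a r₁) := by
  have : NeZero d := ⟨by omega⟩
  have hr₁0 : 0 < r₁ := hr₁ ▸ lt_min (by positivity) hr₀
  have hsub : ball a r₁ ⊆ Ω := (ball_subset_ball (hr₁ ▸ min_le_right _ _)).trans hball
  obtain ⟨e, he, heJ⟩ := exists_equiv_eq_fderiv_norm_symm_le
    ((hf.contDiffAt (hΩ.mem_nhds ha)).differentiableAt two_ne_zero) hc hC.le hdet
    fun i j => hder i [j] (by simp) a ha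
  set J : ℝ := d * ((d - 1).factorial * C ^ (d - 1) / c)
  set δ : ℝ≥0 := ⟨d * √d * C * r₁, by positivity⟩
  have hfe : ∀ x ∈ ball a r₁, ‖fderiv ℝ f x - e‖ ≤ δ := fun x hx => by
    rw [he]
    refine (norm_fderiv_sub_fderiv_le isOpen_ball (convex_ball a r₁) (hf.mono hsub) hC.le
      (fun i j k y hy => hder i [k, j] (by simp) y (hsub hy)) (mem_ball_self hr₁0) hx).trans ?_
    show _ ≤ d * √d * C * r₁
    gcongr
    exact (mem_ball_iff_norm.1 hx).le
  have hκ : (2 * J)⁻¹ ≤ ‖(e.symm : Eu d →L[ℝ] Eu d)‖⁻¹ - δ := by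
    have hδ : (δ : ℝ) ≤ (2 * J)⁻¹ :=
      deriv_oscillation_le_of_le_radius hd hc hC (hr₁ ▸ min_le_left _ _)
    have hJ := inv_anti₀ e.norm_symm_pos heJ
    rw [mul_inv] at hδ ⊢
    linarith
  obtain ⟨hinj, hopen, himage, g, hgf, hg⟩ := inverse_function_theorem_on_ball two_ne_zero
    (hf.mono hsub) hfe (by linarith [inv_pos.2 (by positivity : 0 < 2 * J)])
  refine ⟨hinj, hopen, hb ▸ (ball_subset_ball ?_).trans himage, g, hgf, hg⟩
  rw [hr₂]
  exact mul_le_mul_of_nonneg_right ((shrink_factor_le_inv_two_mul hd hc hC).trans hκ) hr₁0.le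
end
end

section
/- Let d ≥ 1, let Ω ⊆ ℝ^d be open, and let Φ : Ω → ℝ be C³ with |D^ν Φ(x)| ≤ A for all x ∈ Ω and all multi-indices ν with 2 ≤ |ν| ≤ 3. Let x̃ ∈ Ω be a critical point, DΦ(x̃) = 0, with |det(D²Φ(x̃))| ≥ c > 0. Then there exist r* > 0 and c′ > 0, depending only on d, A and c, such that for every x ∈ Ω with |x − x̃| < r* and with the segment from x̃ to x contained in Ω, one has |DΦ(x)| ≥ c′·|x − x̃|. -/
noncomputable section

open Real MeasureTheory Pointwise

/-!
Applying the mean value inequality twice along the segment from `x₀` to `x`, with the third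
derivatives bounded by `A`, gives `|DΦ(x) - D²Φ(x₀)(x - x₀)| ≤ K |x - x₀|²` since `DΦ(x₀) = 0`.
By Cramer's rule the inverse of the Hessian is its adjugate, whose entries are bounded in terms
of `d` and `A`, divided by its determinant, which is at least `c`; hence `|D²Φ(x₀) v| ≥ m |v|`
with `m` depending only on `d`, `A`, `c`, and the linear term dominates once
`|x - x₀| < m / (2K)`.
-/

open EuclideanSpace Matrix Nat Topology

local notation "𝐞" i:max => EuclideanSpace.single i (1 : ℝ)

section Coordinates

variable {d : ℕ} {F : Type*} [NormedAddCommGroup F] [NormedSpace ℝ F]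

lemma EuclideanSpace.sum_smul_single_eq (v : Eu d) : ∑ i, v i • 𝐞 i = v := by
  simpa [basisFun_apply] using (basisFun (Fin d) ℝ).sum_repr v

lemma EuclideanSpace.norm_le_sum_abs (v : Eu d) : ‖v‖ ≤ ∑ i, |v i| := by
  conv_lhs => rw [← sum_smul_single_eq v]
  refine (norm_sum_le _ _).trans_eq (Finset.sum_congr rfl fun i _ => ?_)
  rw [norm_smul, PiLp.norm_single, norm_one, mul_one, Real.norm_eq_abs]

lemma ContinuousLinearMap.apply_eq_sum_smul_single (L : Eu d →L[ℝ] F) (v : Eu d) :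
    L v = ∑ i, v i • L (𝐞 i) := by
  conv_lhs => rw [← sum_smul_single_eq v]
  simp only [map_sum, map_smul]

lemma ContinuousLinearMap.opNorm_le_card_mul (L : Eu d →L[ℝ] F) {C : ℝ} (hC : 0 ≤ C)
    (h : ∀ i, ‖L (𝐞 i)‖ ≤ C) : ‖L‖ ≤ d * C := by
  refine L.opNorm_le_bound (by positivity) fun v => ?_
  rw [L.apply_eq_sum_smul_single]
  calc ‖∑ i, v i • L (𝐞 i)‖ ≤ ∑ i, ‖v i • L (𝐞 i)‖ := norm_sum_le _ _
    _ ≤ ∑ _i : Fin d, ‖v‖ * C := by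
        refine Finset.sum_le_sum fun i _ => ?_
        rw [norm_smul]
        exact mul_le_mul (PiLp.norm_apply_le v i) (h i) (norm_nonneg _) (norm_nonneg _)
    _ = d * C * ‖v‖ := by
        simp only [Finset.sum_const, Finset.card_univ, Fintype.card_fin, nsmul_eq_mul]
        ring

end Coordinates

section Cramer

variable {n : Type*} [Fintype n] [DecidableEq n]

lemma Matrix.abs_adjugate_apply_le (M : Matrix n n ℝ) {a : ℝ} (ha : 1 ≤ a)
    (hM : ∀ i j, |M i j| ≤ a) (i j : n) :
    |M.adjugate i j| ≤ (Fintype.card n)! * a ^ Fintype.card n := by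
  have hrow : ∀ k l, |M.updateRow j (Pi.single i 1) k l| ≤ a := by
    intro k l
    rw [Matrix.updateRow_apply]
    split
    · by_cases hli : l = i <;> simp [hli] <;> linarith
    · exact hM k l
  simpa [Matrix.adjugate_apply, nsmul_eq_mul] using Matrix.det_le (abv := AbsoluteValue.abs) hrow

lemma Matrix.abs_det_mul_abs_le (M : Matrix n n ℝ) {E : ℝ} (hadj : ∀ i j, |M.adjugate i j| ≤ E)
    (v : n → ℝ) (i : n) : |M.det| * |v i| ≤ E * ∑ j, |(v ᵥ* M) j| := by
  have hcramer : M.det * v i = ∑ j, (v ᵥ* M) j * M.adjugate j i := by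
    have := congrFun (show v ᵥ* M ᵥ* M.adjugate = M.det • v by
      rw [Matrix.vecMul_vecMul, Matrix.mul_adjugate, Matrix.vecMul_smul, Matrix.vecMul_one]) i
    simpa [Matrix.vecMul, dotProduct] using this.symm
  rw [← abs_mul, hcramer, Finset.mul_sum]
  refine (Finset.abs_sum_le_sum_abs _ _).trans (Finset.sum_le_sum fun j _ => ?_)
  rw [abs_mul, mul_comm E]
  exact mul_le_mul_of_nonneg_left (hadj j i) (abs_nonneg _)

end Cramer

lemma mul_norm_le_of_le_abs_det {d : ℕ} (B : Eu d →L[ℝ] Eu d →L[ℝ] ℝ)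
    (M : Matrix (Fin d) (Fin d) ℝ) (hBM : ∀ i j, B (𝐞 i) (𝐞 j) = M i j)
    {a c : ℝ} (ha : 1 ≤ a) (hM : ∀ i j, |M i j| ≤ a) (hdet : c ≤ |M.det|) (v : Eu d) :
    c * ‖v‖ ≤ d ^ 2 * (d ! * a ^ d) * ‖B v‖ := by
  have hE : ∀ i j, |M.adjugate i j| ≤ d ! * a ^ d := by
    simpa using M.abs_adjugate_apply_le ha hM
  have hrow : ∀ j, |(v ᵥ* M) j| ≤ ‖B v‖ := fun j => by
    have hvM : (v ᵥ* M) j = B v (𝐞 j) := by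
      change _ = B.flip (𝐞 j) v
      simp [ContinuousLinearMap.apply_eq_sum_smul_single _ v, Matrix.vecMul, dotProduct, hBM]
    simpa [hvM] using (B v).le_opNorm (𝐞 j)
  calc c * ‖v‖ ≤ |M.det| * ∑ i, |v i| :=
        mul_le_mul hdet v.norm_le_sum_abs (norm_nonneg _) (abs_nonneg _)
    _ = ∑ i, |M.det| * |v i| := Finset.mul_sum _ _ _
    _ ≤ ∑ _i : Fin d, d ! * a ^ d * (d * ‖B v‖) := Finset.sum_le_sum fun i _ =>
        (M.abs_det_mul_abs_le hE (fun k => v k) i).trans <| mul_le_mul_of_nonneg_left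
          ((Finset.sum_le_sum fun j _ => hrow j).trans_eq (by simp)) (by positivity)
    _ = d ^ 2 * (d ! * a ^ d) * ‖B v‖ := by simp; ring

section Calculus

variable {E F G : Type*} [NormedAddCommGroup E] [NormedSpace ℝ E] [NormedAddCommGroup F]
  [NormedSpace ℝ F] [NormedAddCommGroup G] [NormedSpace ℝ G]

lemma ContDiffOn.differentiableAt_fderiv {f : E → F} {s : Set E} {n : WithTop ℕ∞}
    (hf : ContDiffOn ℝ n f s) (hs : IsOpen s) (hn : 2 ≤ n) {x : E} (hx : x ∈ s) :
    DifferentiableAt ℝ (fderiv ℝ f) x :=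
  ((hf.fderiv_of_isOpen hs (m := 1) (by rwa [one_add_one_eq_two])).differentiableOn one_ne_zero x
    hx).differentiableAt (hs.mem_nhds hx)

lemma fderiv_apply_const_apply {g : E → F →L[ℝ] G} {x : E} (hg : DifferentiableAt ℝ g x)
    (v : E) (w : F) : fderiv ℝ (fun y => g y w) x v = fderiv ℝ g x v w := by
  simp [fderiv_clm_apply hg (differentiableAt_const w)]

lemma norm_sub_sub_fderiv_le_of_segment {g : E → F} {x₀ x : E} {K : ℝ}
    (hg : ∀ z ∈ segment ℝ x₀ x, DifferentiableAt ℝ g z)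
    (hg' : ∀ z ∈ segment ℝ x₀ x, DifferentiableAt ℝ (fderiv ℝ g) z)
    (hK : ∀ z ∈ segment ℝ x₀ x, ‖fderiv ℝ (fderiv ℝ g) z‖ ≤ K) :
    ‖g x - g x₀ - fderiv ℝ g x₀ (x - x₀)‖ ≤ K * ‖x - x₀‖ ^ 2 := by
  have hK0 : 0 ≤ K :=
    (norm_nonneg (fderiv ℝ (fderiv ℝ g) x₀)).trans (hK x₀ (left_mem_segment ℝ x₀ x))
  have hlip : ∀ z ∈ segment ℝ x₀ x, ‖fderiv ℝ g z - fderiv ℝ g x₀‖ ≤ K * ‖x - x₀‖ := fun z hz =>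
    ((convex_segment x₀ x).norm_image_sub_le_of_norm_fderiv_le hg' hK
      (left_mem_segment ℝ x₀ x) hz).trans
      (mul_le_mul_of_nonneg_left (norm_sub_le_of_mem_segment hz) hK0)
  have hderiv : ∀ z ∈ segment ℝ x₀ x, HasFDerivWithinAt (fun y => g y - fderiv ℝ g x₀ (y - x₀))
      (fderiv ℝ g z - fderiv ℝ g x₀) (segment ℝ x₀ x) z := fun z hz =>
    ((hg z hz).hasFDerivAt.sub
      ((fderiv ℝ g x₀).hasFDerivAt.comp z ((hasFDerivAt_id z).sub_const x₀))).hasFDerivWithinAt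
  have := (convex_segment x₀ x).norm_image_sub_le_of_norm_hasFDerivWithin_le hderiv hlip
    (left_mem_segment ℝ x₀ x) (right_mem_segment ℝ x₀ x)
  calc ‖g x - g x₀ - fderiv ℝ g x₀ (x - x₀)‖
      = ‖g x - fderiv ℝ g x₀ (x - x₀) - (g x₀ - fderiv ℝ g x₀ (x₀ - x₀))‖ := by
        rw [sub_self, map_zero, sub_zero, sub_right_comm]
    _ ≤ K * ‖x - x₀‖ * ‖x - x₀‖ := this
    _ = K * ‖x - x₀‖ ^ 2 := by ring

end Calculus

section PartialDerivatives

variable {d : ℕ} {Φ : Eu d → ℝ} {x : Eu d}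

lemma pd_pair_eq (hΦ : DifferentiableAt ℝ (fderiv ℝ Φ) x) (i j : Fin d) :
    pd [i, j] Φ x = fderiv ℝ (fderiv ℝ Φ) x (𝐞 i) (𝐞 j) :=
  fderiv_apply_const_apply hΦ _ _

lemma pd_triple_eq (hΦ : ∀ᶠ y in 𝓝 x, DifferentiableAt ℝ (fderiv ℝ Φ) y)
    (hΦ' : DifferentiableAt ℝ (fderiv ℝ (fderiv ℝ Φ)) x) (i j k : Fin d) :
    pd [i, j, k] Φ x = fderiv ℝ (fderiv ℝ (fderiv ℝ Φ)) x (𝐞 i) (𝐞 j) (𝐞 k) := by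
  have hpair : pd [j, k] Φ =ᶠ[𝓝 x] fun y => fderiv ℝ (fderiv ℝ Φ) y (𝐞 j) (𝐞 k) :=
    hΦ.mono fun y hy => pd_pair_eq hy j k
  change fderiv ℝ (pd [j, k] Φ) x (𝐞 i) = _
  rw [hpair.fderiv_eq, fderiv_apply_const_apply (hΦ'.clm_apply (differentiableAt_const _)),
    fderiv_apply_const_apply hΦ']

lemma norm_fderiv_sub_sub_le_of_abs_pd_le {Ω : Set (Eu d)} {x₀ : Eu d} {A : ℝ} (hΩ : IsOpen Ω)
    (hD2 : ∀ y ∈ Ω, DifferentiableAt ℝ (fderiv ℝ Φ) y)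
    (hD3 : ∀ y ∈ Ω, DifferentiableAt ℝ (fderiv ℝ (fderiv ℝ Φ)) y) (hseg : segment ℝ x₀ x ⊆ Ω)
    (hA : 0 ≤ A) (hpd : ∀ z ∈ Ω, ∀ i j k, |pd [i, j, k] Φ z| ≤ A) :
    ‖fderiv ℝ Φ x - fderiv ℝ Φ x₀ - fderiv ℝ (fderiv ℝ Φ) x₀ (x - x₀)‖ ≤
      d ^ 3 * A * ‖x - x₀‖ ^ 2 := by
  refine norm_sub_sub_fderiv_le_of_segment (fun z hz => hD2 z (hseg hz))
    (fun z hz => hD3 z (hseg hz)) fun z hz => ?_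
  have hz : z ∈ Ω := hseg hz
  have hpd_eq := pd_triple_eq (Filter.eventually_of_mem (hΩ.mem_nhds hz) hD2) (hD3 z hz)
  calc _ ≤ (d : ℝ) * (d * (d * A)) :=
        ContinuousLinearMap.opNorm_le_card_mul _ (by positivity) fun i =>
          ContinuousLinearMap.opNorm_le_card_mul _ (by positivity) fun j =>
            ContinuousLinearMap.opNorm_le_card_mul _ hA fun k => by
              rw [Real.norm_eq_abs, ← hpd_eq]
              exact hpd z hz i j k
    _ = d ^ 3 * A := by ring

end PartialDerivatives

lemma half_mul_le_norm_of_norm_sub_le_sq {F : Type*} [SeminormedAddCommGroup F] {y w : F}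
    {m K t : ℝ} (hK : 0 < K) (ht : 0 ≤ t) (htm : t < m / (2 * K)) (hw : m * t ≤ ‖w‖)
    (hyw : ‖y - w‖ ≤ K * t ^ 2) : m / 2 * t ≤ ‖y‖ := by
  have hKt : K * t ≤ m / 2 := by
    rw [lt_div_iff₀ (by positivity)] at htm
    linarith
  have := norm_sub_norm_le w y
  rw [norm_sub_rev] at this
  nlinarith

/-- gradient lower bound near a nondegenerate critical point. -/
theorem stmt15 (d : ℕ) (hd : 1 ≤ d) (A c : ℝ) (hA : 0 < A) (hc : 0 < c) :
    ∃ rs > 0, ∃ c' > 0, ∀ (Ω : Set (Eu d)) (Φ : Eu d → ℝ) (x₀ : Eu d),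
      IsOpen Ω → ContDiffOn ℝ 3 Φ Ω → x₀ ∈ Ω →
      (∀ L : List (Fin d), 2 ≤ L.length → L.length ≤ 3 → ∀ x ∈ Ω, |pd L Φ x| ≤ A) →
      fderiv ℝ Φ x₀ = 0 → c ≤ |(hess Φ x₀).det| →
      ∀ x ∈ Ω, ‖x - x₀‖ < rs → segment ℝ x₀ x ⊆ Ω →
        c' * ‖x - x₀‖ ≤ ‖fderiv ℝ Φ x‖ := by
  have hd0 : (0 : ℝ) < d := by exact_mod_cast hd
  set κ : ℝ := d ^ 2 * (d ! * max A 1 ^ d)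
  set K : ℝ := d ^ 3 * A
  have hκ : 0 < κ := by positivity
  have hK : 0 < K := by positivity
  refine ⟨c / κ / (2 * K), by positivity, c / κ / 2, by positivity, ?_⟩
  intro Ω Φ x₀ hΩ hΦ hx₀ hbound hcrit hdet x _ hxr hseg
  have hD2 : ∀ y ∈ Ω, DifferentiableAt ℝ (fderiv ℝ Φ) y := fun y hy =>
    hΦ.differentiableAt_fderiv hΩ (by norm_num) hy
  have hD3 : ∀ y ∈ Ω, DifferentiableAt ℝ (fderiv ℝ (fderiv ℝ Φ)) y := fun y hy =>
    (hΦ.fderiv_of_isOpen hΩ (m := 2) (by norm_num)).differentiableAt_fderiv hΩ le_rfl hy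
  have hlower : c / κ * ‖x - x₀‖ ≤ ‖fderiv ℝ (fderiv ℝ Φ) x₀ (x - x₀)‖ := by
    rw [div_mul_eq_mul_div, div_le_iff₀' hκ]
    exact mul_norm_le_of_le_abs_det _ (hess Φ x₀) (fun i j => (pd_pair_eq (hD2 x₀ hx₀) i j).symm)
      (le_max_right A 1) (fun i j => (hbound [i, j] le_rfl (by simp) x₀ hx₀).trans
        (le_max_left A 1)) hdet _
  have htaylor := norm_fderiv_sub_sub_le_of_abs_pd_le hΩ hD2 hD3 hseg hA.le
    fun z hz i j k => hbound [i, j, k] (by simp) le_rfl z hz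
  rw [hcrit, sub_zero] at htaylor
  exact half_mul_le_norm_of_norm_sub_le_sq hK (norm_nonneg _) hxr hlower htaylor
end
end
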